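/- arXiv:math/0510120 — 6 statements merged into one kernel-verified Lean document; each statement's English description precedes it below -/
import Mathlib

section
/- Let ⟨X,G⟩ ∈ K and let 𝒰, 𝒱 be convergent pairwise disjoint families of regular open subsets of X such that lim 𝒰 ∈ D(X,G) and lim 𝒱 ∈ D(X,G). Then ψ_eq(𝒰,𝒱) holds if and only if lim 𝒰 = lim 𝒱. -/
open Set Topology Filter

/-- The group of self-homeomorphisms of a topological space, under composition. -/
instance homeoGroup (X : Type*) [TopologicalSpace X] : Group (X ≃ₜ X) where
  mul f g := g.trans f
  one := Homeomorph.refl X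
  inv := Homeomorph.symm
  mul_assoc f g h := Homeomorph.ext fun _ => rfl
  one_mul f := Homeomorph.ext fun _ => rfl
  mul_one f := Homeomorph.ext fun _ => rfl
  inv_mul_cancel f := Homeomorph.ext fun x => f.symm_apply_apply x

variable {X : Type*} [TopologicalSpace X]

/-- `g` is the identity on some neighborhood of `y`. -/
def LocallyId (g : X ≃ₜ X) (y : X) : Prop := ∃ U ∈ 𝓝 y, ∀ x ∈ U, g x = x

/-- A set is somewhere dense if its closure has nonempty interior. -/
def SomewhereDense (A : Set X) : Prop := (interior (closure A)).Nonempty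

/-- `G` is a locally moving group of `X`. -/
def IsLocallyMoving (G : Subgroup (X ≃ₜ X)) : Prop :=
  ∀ U : Set X, IsOpen U → U.Nonempty →
    ∃ g ∈ G, g ≠ Homeomorph.refl X ∧ ∀ x ∉ U, g x = x

/-- The relation `DF_{X,G}(x,y)`. -/
def DF (G : Subgroup (X ≃ₜ X)) (x y : X) : Prop :=
  SomewhereDense {z | ∃ g ∈ G, LocallyId g y ∧ z = g x}

/-- A nonempty open `V` dissects the set `A`. -/
def Dissects (G : Subgroup (X ≃ₜ X)) (V A : Set X) : Prop :=
  IsOpen V ∧ V.Nonempty ∧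
    ∀ W : Set X, IsOpen W → W.Nonempty → W ⊆ V →
      ∃ g ∈ G, {a ∈ A | g a ∈ W}.Infinite ∧ {a ∈ A | LocallyId g a}.Infinite

def Dissectable (G : Subgroup (X ≃ₜ X)) (A : Set X) : Prop := ∃ V, Dissects G V A

/-- A set is discrete if it has no accumulation points in `X`. -/
def DiscreteSet (A : Set X) : Prop := ∀ x : X, ¬ AccPt x (𝓟 A)

/-- An open set `U` is flexible if it has a dense subset `D` all of whose infinite
discrete subsets are dissectable. -/
def Flexible (G : Subgroup (X ≃ₜ X)) (U : Set X) : Prop :=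
  IsOpen U ∧ ∃ D ⊆ U, U ⊆ closure D ∧
    ∀ A ⊆ D, A.Infinite → DiscreteSet A → Dissectable G A

/-- `D(X,G)`: the set of points whose `G`-orbit is somewhere dense. -/
def DSet (G : Subgroup (X ≃ₜ X)) : Set X :=
  {x | SomewhereDense {z | ∃ g ∈ G, z = g x}}

/-- Membership of the space-group pair `⟨X,G⟩` in the class `K`. -/
def MemK (G : Subgroup (X ≃ₜ X)) : Prop :=
  RegularSpace X ∧ FirstCountableTopology X ∧ IsLocallyMoving G ∧
    Dense (DSet G) ∧
    (∀ x ∈ DSet G, ∀ y ∈ DSet G, x ≠ y → DF G x y ∨ DF G y x) ∧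
    (∀ x : X, ∃ U, Flexible G U ∧ x ∈ U)

/-- A regular open set: `U = int (cl U)`. -/
def RegOpen (U : Set X) : Prop := interior (closure U) = U

/-- `lim 𝒰 = x`: every neighborhood of `x` contains all but finitely many members of `𝒰`. -/
def LimFam (𝒰 : Set (Set X)) (x : X) : Prop :=
  ∀ S ∈ 𝓝 x, {U ∈ 𝒰 | ¬ U ⊆ S}.Finite

/-- The nonempty regular open set `V` absorbs the family `𝒰`. -/
def AbsorbsFam (G : Subgroup (X ≃ₜ X)) (V : Set X) (𝒰 : Set (Set X)) : Prop :=
  RegOpen V ∧ V.Nonempty ∧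
    ∀ W : Set X, RegOpen W → W.Nonempty → W ⊆ V →
      ∃ g ∈ G, {U ∈ 𝒰 | ¬ (⇑g '' U) ⊆ W}.Finite

/-- The nonempty regular open set `V` splits the family `𝒰`. -/
def SplitsFam (G : Subgroup (X ≃ₜ X)) (V : Set X) (𝒰 : Set (Set X)) : Prop :=
  RegOpen V ∧ V.Nonempty ∧
    ∀ W : Set X, RegOpen W → W.Nonempty → W ⊆ V →
      ∃ g ∈ G, {U ∈ 𝒰 | ((⇑g '' U) ∩ W).Nonempty}.Infinite ∧
        {U ∈ 𝒰 | ∃ U' : Set X, RegOpen U' ∧ U'.Nonempty ∧ U' ⊆ U ∧ ∀ x ∈ U', g x = x}.Infinite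

/-- `ψ_cnvrg(𝒰)`: `𝒰` is infinite and pairwise disjoint, absorbable, and not splittable. -/
def PsiCnvrg (G : Subgroup (X ≃ₜ X)) (𝒰 : Set (Set X)) : Prop :=
  𝒰.Infinite ∧ 𝒰.Pairwise Disjoint ∧
    (∃ V, AbsorbsFam G V 𝒰) ∧ ¬ (∃ V, SplitsFam G V 𝒰)

/-- `ψ¹_eq(𝒰,𝒱)`. -/
def PsiEqOne (G : Subgroup (X ≃ₜ X)) (𝒰 𝒱 : Set (Set X)) : Prop :=
  ¬ ∃ S : Set X, RegOpen S ∧ S.Nonempty ∧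
      ∀ T : Set X, RegOpen T → T.Nonempty → T ⊆ S →
        ∃ g ∈ G, {U ∈ 𝒰 | ¬ (⇑g '' U) ⊆ T}.Finite ∧
          {V ∈ 𝒱 | ¬ ∀ x ∈ V, g x = x}.Finite

/-- `ψ_eq(𝒰,𝒱)`. -/
def PsiEq (G : Subgroup (X ≃ₜ X)) (𝒰 𝒱 : Set (Set X)) : Prop :=
  PsiEqOne G 𝒰 𝒱 ∧ PsiEqOne G 𝒱 𝒰

/-- `ψ_∈(𝒰,V)`. -/
def PsiMem (G : Subgroup (X ≃ₜ X)) (𝒰 : Set (Set X)) (V : Set X) : Prop :=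
  ∀ 𝒲 : Set (Set X), (∀ W ∈ 𝒲, RegOpen W) → PsiCnvrg G 𝒲 → PsiEq G 𝒰 𝒲 →
    {W ∈ 𝒲 | ¬ W ⊆ V}.Finite

/-- `interior (closure A)` is always regular open. -/
lemma regOpen_int_cl (A : Set X) : RegOpen (interior (closure A)) := by
  unfold RegOpen
  apply subset_antisymm
  · exact interior_mono (closure_mono interior_subset |>.trans closure_closure.subset)
  · exact subset_interior_iff.2 ⟨interior (closure A), isOpen_interior,
      subset_rfl, subset_closure⟩

/-- From an infinite family, avoiding two finite bad subfamilies and `∅` and one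
extra member, we can pick a member. -/
lemma exists_good_member {𝒱 : Set (Set X)} (hinf : 𝒱.Infinite)
    {B1 B2 : Set (Set X)} (h1 : B1.Finite) (h2 : B2.Finite) (E : Set X) :
    ∃ V ∈ 𝒱, V ∉ B1 ∧ V ∉ B2 ∧ V.Nonempty ∧ V ≠ E := by
  have : (𝒱 \ (B1 ∪ B2 ∪ {(∅ : Set X)} ∪ {E})).Infinite :=
    hinf.diff (((h1.union h2).union (Set.finite_singleton _)).union (Set.finite_singleton _))
  obtain ⟨V, hV⟩ := this.nonempty
  simp only [Set.mem_diff, Set.mem_union, Set.mem_singleton_iff, not_or] at hV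
  refine ⟨V, hV.1, hV.2.1.1.1, hV.2.1.1.2, ?_, hV.2.2⟩
  exact Set.nonempty_iff_ne_empty.2 hV.2.1.2

/-- If `DF G x y` holds and `𝒰 → x`, `𝒱 → y`, then `ψ¹_eq(𝒰,𝒱)` fails. -/
lemma not_psiEqOne_of_DF {G : Subgroup (X ≃ₜ X)} {x y : X} (hdf : DF G x y)
    {𝒰 𝒱 : Set (Set X)} (hx : LimFam 𝒰 x) (hy : LimFam 𝒱 y) :
    ¬ PsiEqOne G 𝒰 𝒱 := by
  intro hpsi
  apply hpsi
  set A := {z | ∃ g ∈ G, LocallyId g y ∧ z = g x} with hA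
  refine ⟨interior (closure A), regOpen_int_cl A, hdf, ?_⟩
  intro T hTreg hTne hTsub
  -- T meets A
  have hTA : (T ∩ A).Nonempty := by
    rcases hTne with ⟨t, ht⟩
    have hto : IsOpen T := hTreg ▸ isOpen_interior
    have : t ∈ closure A := interior_subset (hTsub ht)
    rcases mem_closure_iff_nhds.1 this T (hto.mem_nhds ht) with ⟨z, hz⟩
    exact ⟨z, hz⟩
  obtain ⟨z, hzT, g, hgG, ⟨N, hN, hNid⟩, rfl⟩ := hTA
  refine ⟨g, hgG, ?_, ?_⟩
  · -- cofinitely many U mapped into T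
    have hto : IsOpen T := hTreg ▸ isOpen_interior
    have hpre : (⇑g) ⁻¹' T ∈ 𝓝 x :=
      (hto.preimage g.continuous).mem_nhds (by simpa using hzT)
    refine (hx _ hpre).subset ?_
    rintro U ⟨hU1, hU2⟩
    refine ⟨hU1, fun hsub => hU2 ?_⟩
    exact (Set.image_subset_iff.2 (fun u hu => hsub hu))
  · -- cofinitely many V fixed pointwise
    refine (hy N hN).subset ?_
    rintro V ⟨hV1, hV2⟩
    exact ⟨hV1, fun hsub => hV2 fun v hv => hNid v (hsub hv)⟩

/-- If `𝒰` and `𝒱` both converge to the same point `x`, with `𝒰` pairwise disjoint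
and both infinite, then `ψ¹_eq(𝒰,𝒱)` holds (in a regular space). -/
lemma psiEqOne_of_same_limit [RegularSpace X] {G : Subgroup (X ≃ₜ X)}
    {𝒰 𝒱 : Set (Set X)} (h𝒰reg : ∀ U ∈ 𝒰, RegOpen U)
    (h𝒰inf : 𝒰.Infinite) (h𝒱inf : 𝒱.Infinite)
    (h𝒰d : 𝒰.Pairwise Disjoint) {x : X}
    (hx : LimFam 𝒰 x) (hy : LimFam 𝒱 x) :
    PsiEqOne G 𝒰 𝒱 := by
  rintro ⟨S, hSreg, hSne, hS⟩
  have hSo : IsOpen S := hSreg ▸ isOpen_interior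
  -- Key claim: x belongs to the closure of every nonempty regular open T ⊆ S.
  have key : ∀ T : Set X, RegOpen T → T.Nonempty → T ⊆ S → x ∈ closure T := by
    intro T hTreg hTne hTsub
    obtain ⟨g, hgG, hgU, hgV⟩ := hS T hTreg hTne hTsub
    -- x is in the closure of the fixed-point set of g
    have hfix : x ∈ closure {z | g z = z} := by
      rw [mem_closure_iff_nhds]
      intro N hN
      obtain ⟨V, hV𝒱, hVb1, hVb2, hVne, -⟩ :=
        exists_good_member h𝒱inf hgV (hy N hN) (∅ : Set X)
      rcases hVne with ⟨v, hv⟩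
      have h1 : V ⊆ N := by
        by_contra hc; exact hVb2 ⟨hV𝒱, hc⟩
      have h2 : ∀ w ∈ V, g w = w := by
        by_contra hc; exact hVb1 ⟨hV𝒱, hc⟩
      exact ⟨v, h1 hv, h2 v hv⟩
    -- x is in the closure of the set of points mapped into T by g
    have hmap : x ∈ closure {w | g w ∈ T} := by
      rw [mem_closure_iff_nhds]
      intro N hN
      obtain ⟨U, hU𝒰, hUb1, hUb2, hUne, -⟩ :=
        exists_good_member h𝒰inf hgU (hx N hN) (∅ : Set X)
      have h1 : U ⊆ N := by
        by_contra hc; exact hUb2 ⟨hU𝒰, hc⟩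
      have h2 : (⇑g) '' U ⊆ T := by
        by_contra hc; exact hUb1 ⟨hU𝒰, hc⟩
      rcases hUne with ⟨u, hu⟩
      exact ⟨u, h1 hu, h2 ⟨u, hu, rfl⟩⟩
    -- filter arguments
    have hL1 : (𝓝 x ⊓ 𝓟 {z | g z = z}).NeBot := mem_closure_iff_clusterPt.1 hfix
    have ht1 : Filter.Tendsto (⇑g) (𝓝 x ⊓ 𝓟 {z | g z = z}) (𝓝 (g x)) :=
      (g.continuous.tendsto x).mono_left inf_le_left
    have ht2 : Filter.Tendsto (⇑g) (𝓝 x ⊓ 𝓟 {z | g z = z}) (𝓝 x) := by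
      have heq : (⇑g) =ᶠ[𝓝 x ⊓ 𝓟 {z | g z = z}] id := by
        filter_upwards [Filter.mem_inf_of_right (Filter.mem_principal_self _)] with z hz
        exact hz
      exact (Filter.tendsto_id.mono_left inf_le_left).congr' heq.symm
    have hins : Inseparable (g x) x := tendsto_nhds_unique_inseparable ht1 ht2
    have hL2 : (𝓝 x ⊓ 𝓟 {w | g w ∈ T}).NeBot := mem_closure_iff_clusterPt.1 hmap
    have ht3 : Filter.Tendsto (⇑g) (𝓝 x ⊓ 𝓟 {w | g w ∈ T}) (𝓝 (g x)) :=
      (g.continuous.tendsto x).mono_left inf_le_left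
    have hgx : g x ∈ closure T :=
      mem_closure_of_tendsto ht3
        (Filter.mem_inf_of_right (Filter.mem_principal_self _))
    -- transfer along inseparability
    have : 𝓝 (g x) = 𝓝 x := hins
    rw [mem_closure_iff_nhds] at hgx ⊢
    intro N hN
    exact hgx N (this ▸ hN)
  -- Produce two disjoint nonempty regular open subsets of S.
  obtain ⟨g₀, hg₀G, hg₀U, -⟩ := hS S hSreg hSne subset_rfl
  obtain ⟨U₁, hU₁𝒰, hU₁b, -, hU₁ne, -⟩ :=
    exists_good_member h𝒰inf hg₀U (Set.finite_empty (α := Set X)) (∅ : Set X)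
  obtain ⟨U₂, hU₂𝒰, hU₂b, -, hU₂ne, hU₂ne'⟩ :=
    exists_good_member h𝒰inf hg₀U (Set.finite_singleton U₁) U₁
  have hU₂neU₁ : U₂ ≠ U₁ := hU₂ne'
  have hsub₁ : (⇑g₀) '' U₁ ⊆ S := by
    by_contra hc; exact hU₁b ⟨hU₁𝒰, hc⟩
  have hsub₂ : (⇑g₀) '' U₂ ⊆ S := by
    by_contra hc; exact hU₂b ⟨hU₂𝒰, hc⟩
  set W₁ := (⇑g₀) '' U₁ with hW₁def
  set W₂ := (⇑g₀) '' U₂ with hW₂def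
  have hU₁o : IsOpen U₁ := (h𝒰reg U₁ hU₁𝒰) ▸ isOpen_interior
  have hU₂o : IsOpen U₂ := (h𝒰reg U₂ hU₂𝒰) ▸ isOpen_interior
  have hW₁o : IsOpen W₁ := g₀.isOpenMap U₁ hU₁o
  have hW₂o : IsOpen W₂ := g₀.isOpenMap U₂ hU₂o
  have hW₁ne : W₁.Nonempty := hU₁ne.image _
  have hW₂ne : W₂.Nonempty := hU₂ne.image _
  have hWdisj : Disjoint W₁ W₂ := by
    have hUdisj : Disjoint U₁ U₂ := h𝒰d hU₁𝒰 hU₂𝒰 (fun h => hU₂neU₁ h.symm)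
    exact (Set.disjoint_image_iff g₀.injective).2 hUdisj
  -- Regularize the Wᵢ to get disjoint nonempty regular open T₁, T₂ ⊆ S.
  set T₁ := interior (closure W₁) with hT₁def
  set T₂ := interior (closure W₂) with hT₂def
  have hT₁sub : T₁ ⊆ S := by
    rw [hT₁def, ← hSreg]
    exact interior_mono (closure_mono hsub₁)
  have hT₂sub : T₂ ⊆ S := by
    rw [hT₂def, ← hSreg]
    exact interior_mono (closure_mono hsub₂)
  have hT₁ne : T₁.Nonempty := hW₁ne.mono (hW₁o.subset_interior_closure)
  have hT₂ne : T₂.Nonempty := hW₂ne.mono (hW₂o.subset_interior_closure)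
  have hTdisj : Disjoint T₁ T₂ := by
    rw [Set.disjoint_left]
    intro z hz₁ hz₂
    -- T₁ open meets closure W₂ at z, so T₁ meets W₂; but T₁ ⊆ closure W₁.
    have hz₂' : z ∈ closure W₂ := interior_subset hz₂
    rcases mem_closure_iff_nhds.1 hz₂' T₁ ((hT₁def ▸ isOpen_interior).mem_nhds hz₁)
      with ⟨w, hwT₁, hwW₂⟩
    have hw₁ : w ∈ closure W₁ := interior_subset hwT₁
    rcases mem_closure_iff_nhds.1 hw₁ W₂ (hW₂o.mem_nhds hwW₂) with ⟨v, hvW₂, hvW₁⟩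
    exact Set.disjoint_left.1 hWdisj hvW₁ hvW₂
  -- From the key claim, `x` lies in each Tᵢ (after shrinking); contradiction.
  have hmem : ∀ T : Set X, IsOpen T → T.Nonempty → T ⊆ S → x ∈ T := by
    intro T hTo hTne hTsub
    rcases hTne with ⟨p, hp⟩
    obtain ⟨C, hCnhds, hCcl, hCsub⟩ := exists_mem_nhds_isClosed_subset (hTo.mem_nhds hp)
    set T' := interior (closure (interior C)) with hT'def
    have hT'ne : T'.Nonempty :=
      ⟨p, isOpen_interior.subset_interior_closure (mem_interior_iff_mem_nhds.2 hCnhds)⟩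
    have hT'subC : T' ⊆ C := by
      calc T' ⊆ closure (interior C) := interior_subset
        _ ⊆ closure C := closure_mono interior_subset
        _ = C := hCcl.closure_eq
    have hxT' : x ∈ closure T' :=
      key T' (regOpen_int_cl _) hT'ne (hT'subC.trans (hCsub.trans hTsub))
    have : closure T' ⊆ C := hCcl.closure_subset_iff.2 hT'subC
    exact hCsub (this hxT')
  exact Set.disjoint_left.1 hTdisj
    (hmem T₁ (hT₁def ▸ isOpen_interior) hT₁ne hT₁sub)
    (hmem T₂ (hT₂def ▸ isOpen_interior) hT₂ne hT₂sub)

/-- Proposition 2.6: for `⟨X,G⟩ ∈ K` and convergent pairwise disjoint regular open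
families `𝒰, 𝒱` with limits in `D(X,G)`, `ψ_eq(𝒰,𝒱)` holds iff `lim 𝒰 = lim 𝒱`. -/
theorem psiEq_characterization {X : Type*} [TopologicalSpace X]
    (G : Subgroup (X ≃ₜ X)) (hK : MemK G)
    (𝒰 𝒱 : Set (Set X))
    (h𝒰 : ∀ U ∈ 𝒰, RegOpen U) (h𝒱 : ∀ V ∈ 𝒱, RegOpen V)
    (h𝒰inf : 𝒰.Infinite) (h𝒱inf : 𝒱.Infinite)
    (h𝒰d : 𝒰.Pairwise Disjoint) (h𝒱d : 𝒱.Pairwise Disjoint)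
    (x y : X) (hx : LimFam 𝒰 x) (hy : LimFam 𝒱 y)
    (hxD : x ∈ DSet G) (hyD : y ∈ DSet G) :
    PsiEq G 𝒰 𝒱 ↔ x = y := by
  obtain ⟨hReg, hFC, hLM, hDdense, hQ2, hP4⟩ := hK
  constructor
  · intro hpsi
    by_contra hne
    rcases hQ2 x hxD y hyD hne with hdf | hdf
    · exact not_psiEqOne_of_DF hdf hx hy hpsi.1
    · exact not_psiEqOne_of_DF hdf hy hx hpsi.2
  · rintro rfl
    exact ⟨psiEqOne_of_same_limit h𝒰 h𝒰inf h𝒱inf h𝒰d hx hy,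
      psiEqOne_of_same_limit h𝒱 h𝒱inf h𝒰inf h𝒱d hy hx⟩
end

section
/- Let X be a separable normed space. Then there is a norm |||·||| on X equivalent to the given norm such that: for every finite-dimensional linear subspace M ⊆ X and every ε > 0 there is a linear subspace L ⊆ X of finite codimension such that M ∩ L = {0} and, for the projection P : M + L → L of ⟨L,M⟩, the operator norm of P with respect to |||·||| is < 1 + ε. -/
/-!
Let `B` be the unit ball of the dual and `(y j)` a dense sequence. Since `B` is totally bounded
for each seminorm `f ↦ max_{j<k} |f (y j)|`, there are maps `π k : B → B` of finite range with
`π k f x → f x` uniformly in `f`, for every `x`. The new norm is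
`max ‖x‖ (sup_{f,k} |f x - π k f x|)`. Given a finite-dimensional `M` and `δ > 0`, the convergence
is uniform on the unit sphere of `M`, so `|f v - π k f v| ≤ δ ‖v‖` on `M` for `k ≥ K`; take for
`L` the common kernel of the finitely many functionals `π k f`, `k ≤ K`. For `u ∈ L` the terms
with `k ≤ K` coincide with the term at `K`, so the supremum for `u` exceeds that for `v + u` by at
most `δ ‖v‖`, while Hahn–Banach gives `‖u‖ ≤ sup_f |f u - π K f u|` and `(1 - δ) ‖v‖ ≤ ‖v + u‖`.
-/

open Metric Filter

theorem tendstoUniformly_of_forall_tendstoUniformly_apply {𝕜 E F ι α : Type*}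
    [NontriviallyNormedField 𝕜] [NormedAddCommGroup E] [NormedSpace 𝕜 E] [CompleteSpace 𝕜]
    [NormedAddCommGroup F] [NormedSpace 𝕜 F] [FiniteDimensional 𝕜 E]
    {G : α → ι → E →L[𝕜] F} {G₀ : ι → E →L[𝕜] F} {p : Filter α}
    (h : ∀ x, TendstoUniformly (fun n i => G n i x) (fun i => G₀ i x) p) :
    TendstoUniformly G G₀ p := by
  set b := Module.finBasis 𝕜 E
  obtain ⟨C, hC, hCb⟩ := b.exists_opNorm_le (F := F)
  rw [Metric.tendstoUniformly_iff]
  intro ε hε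
  have hb : ∀ᶠ n in p, ∀ j i, dist (G₀ i (b j)) (G n i (b j)) < ε / (2 * C) :=
    eventually_all.2 fun j => Metric.tendstoUniformly_iff.1 (h (b j)) _ (by positivity)
  filter_upwards [hb] with n hn i
  rw [dist_eq_norm]
  calc ‖G₀ i - G n i‖ ≤ C * (ε / (2 * C)) :=
        hCb (by positivity) fun j => by simpa [dist_eq_norm] using (hn j i).le
    _ < ε := by field_simp; linarith

theorem exists_finiteDimensional_isCompl_biInf_ker {K V : Type*} [Field K] [AddCommGroup V]
    [Module K V] {S : Set (V →ₗ[K] K)} (hS : S.Finite) :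
    ∃ M : Submodule K V, FiniteDimensional K M ∧ IsCompl (⨅ f ∈ S, LinearMap.ker f) M := by
  have : Finite S := hS.to_subtype
  obtain ⟨M, hM⟩ := Submodule.exists_isCompl (⨅ f ∈ S, LinearMap.ker f)
  refine ⟨M, ?_, hM⟩
  set Φ : V →ₗ[K] (S → K) := LinearMap.pi fun f => f
  have hker : LinearMap.ker Φ = ⨅ f ∈ S, LinearMap.ker f := by
    rw [LinearMap.ker_pi, iInf_subtype']
  exact Module.Finite.of_injective (Φ.domRestrict M)
    (LinearMap.injective_domRestrict_iff.2 (hker ▸ hM.disjoint.symm))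

theorem exists_finite_subset_forall_exists_dist_lt {E F : Type*} [SeminormedAddCommGroup E]
    [NormedSpace ℝ E] [NormedAddCommGroup F] [NormedSpace ℝ F] [FiniteDimensional ℝ F]
    (Ψ : E →L[ℝ] F) {B : Set E} (hB : Bornology.IsBounded B) {ε : ℝ} (hε : 0 < ε) :
    ∃ T ⊆ B, T.Finite ∧ ∀ f ∈ B, ∃ g ∈ T, dist (Ψ f) (Ψ g) < ε := by
  have hΨB : TotallyBounded (Ψ '' B) :=
    (Ψ.lipschitz.isBounded_image hB).isCompact_closure.totallyBounded.subset subset_closure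
  obtain ⟨T, hTB, hT, hcover⟩ :=
    Set.exists_subset_image_finite_and.1 (finite_approx_of_totallyBounded hΨB ε hε)
  refine ⟨T, hTB, hT, fun f hf => ?_⟩
  obtain ⟨_, ⟨g, hg, rfl⟩, hfg⟩ := Set.mem_iUnion₂.1 (hcover ⟨f, hf, rfl⟩)
  exact ⟨g, hg, hfg⟩

section DualApproximation

variable {X ι : Type*} [NormedAddCommGroup X] [NormedSpace ℝ X]

theorem tendstoUniformly_apply_of_denseRange {β : Type*} {y : β → X} (hy : DenseRange y)
    {φ : ι → StrongDual ℝ X} {π : ℕ → ι → StrongDual ℝ X} (hφ : ∀ i, ‖φ i‖ ≤ 1)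
    (hπ : ∀ k i, ‖π k i‖ ≤ 1)
    (h : ∀ j, TendstoUniformly (fun k i => π k i (y j)) (fun i => φ i (y j)) atTop) (x : X) :
    TendstoUniformly (fun k i => π k i x) (fun i => φ i x) atTop := by
  rw [Metric.tendstoUniformly_iff]
  intro ε hε
  obtain ⟨j, hj⟩ := hy.exists_dist_lt x (by positivity : 0 < ε / 3)
  rw [dist_eq_norm] at hj
  filter_upwards [Metric.tendstoUniformly_iff.1 (h j) (ε / 3) (by positivity)] with k hk i
  have hφx : ‖φ i x - φ i (y j)‖ ≤ ‖x - y j‖ := by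
    simpa [map_sub] using (φ i).le_of_opNorm_le (hφ i) (x - y j)
  have hπx : ‖π k i (y j) - π k i x‖ ≤ ‖x - y j‖ := by
    simpa [map_sub, norm_sub_rev] using (π k i).le_of_opNorm_le (hπ k i) (x - y j)
  calc dist (φ i x) (π k i x)
      ≤ dist (φ i x) (φ i (y j)) + dist (φ i (y j)) (π k i (y j))
        + dist (π k i (y j)) (π k i x) := dist_triangle4 _ _ _ _
    _ < ε / 3 + ε / 3 + ε / 3 := by
        rw [dist_eq_norm, dist_eq_norm (π k i _)]
        gcongr ?_ + ?_ + ?_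
        · linarith
        · exact hk i
        · linarith
    _ = ε := by ring

theorem tendstoUniformly_apply_of_dist_lt_one_div {y : ℕ → X} {φ : ι → StrongDual ℝ X}
    {π : ℕ → ι → StrongDual ℝ X}
    (h : ∀ k i, ∀ j < k, dist (φ i (y j)) (π k i (y j)) < 1 / (k + 1)) (j : ℕ) :
    TendstoUniformly (fun k i => π k i (y j)) (fun i => φ i (y j)) atTop := by
  rw [Metric.tendstoUniformly_iff]
  intro ε hε
  obtain ⟨N, hN⟩ := exists_nat_one_div_lt hε
  filter_upwards [eventually_gt_atTop j, eventually_ge_atTop N] with k hjk hNk i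
  calc dist (φ i (y j)) (π k i (y j)) < 1 / (k + 1) := h k i j hjk
    _ ≤ 1 / (N + 1) := by gcongr
    _ < ε := hN

theorem exists_finite_approx_closedBall_dual [TopologicalSpace.SeparableSpace X] :
    ∃ π : ℕ → closedBall (0 : StrongDual ℝ X) 1 → StrongDual ℝ X,
      (∀ k f, ‖π k f‖ ≤ 1) ∧ (∀ k, (Set.range (π k)).Finite) ∧
      ∀ x, TendstoUniformly (fun k f => π k f x) (fun f => (f : StrongDual ℝ X) x) atTop := by
  set y := TopologicalSpace.denseSeq X
  have hnet (k : ℕ) := exists_finite_subset_forall_exists_dist_lt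
    (ContinuousLinearMap.pi fun j : Fin k => ContinuousLinearMap.apply ℝ ℝ (y j))
    (isBounded_closedBall (x := (0 : StrongDual ℝ X)) (r := 1))
    (by positivity : (0 : ℝ) < 1 / (k + 1))
  choose T hTB hT hnet using hnet
  choose π hπT hπ using fun k (f : closedBall (0 : StrongDual ℝ X) 1) => hnet k f f.2
  refine ⟨π, fun k f => mem_closedBall_zero_iff.1 (hTB k (hπT k f)),
    fun k => (hT k).subset (Set.range_subset_iff.2 (hπT k)), fun x => ?_⟩
  refine tendstoUniformly_apply_of_denseRange (TopologicalSpace.denseRange_denseSeq X)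
    (fun f => mem_closedBall_zero_iff.1 f.2)
    (fun k f => mem_closedBall_zero_iff.1 (hTB k (hπT k f)))
    (tendstoUniformly_apply_of_dist_lt_one_div (fun k f j hj => ?_)) x
  exact (dist_le_pi_dist _ _ (⟨j, hj⟩ : Fin k)).trans_lt (hπ k f)

end DualApproximation

section Renorming

variable {X ι : Type*} [NormedAddCommGroup X] [NormedSpace ℝ X]

noncomputable def approxGap (φ : ι → StrongDual ℝ X) (π : ℕ → ι → StrongDual ℝ X) (x : X) : ℝ :=
  ⨆ p : ι × ℕ, |φ p.1 x - π p.2 p.1 x|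

noncomputable def approxRenorm (φ : ι → StrongDual ℝ X) (π : ℕ → ι → StrongDual ℝ X) (x : X) :
    ℝ :=
  max ‖x‖ (approxGap φ π x)

variable {φ : ι → StrongDual ℝ X} {π : ℕ → ι → StrongDual ℝ X}

theorem abs_sub_apply_le_two_mul_norm (hφ : ∀ i, ‖φ i‖ ≤ 1) (hπ : ∀ k i, ‖π k i‖ ≤ 1)
    (i : ι) (k : ℕ) (x : X) : |φ i x - π k i x| ≤ 2 * ‖x‖ := by
  have h₁ := (φ i).le_of_opNorm_le (hφ i) x
  have h₂ := (π k i).le_of_opNorm_le (hπ k i) x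
  rw [Real.norm_eq_abs] at h₁ h₂
  linarith [abs_sub (φ i x) (π k i x)]

theorem abs_sub_apply_le_approxGap (hφ : ∀ i, ‖φ i‖ ≤ 1) (hπ : ∀ k i, ‖π k i‖ ≤ 1)
    (i : ι) (k : ℕ) (x : X) : |φ i x - π k i x| ≤ approxGap φ π x :=
  le_ciSup (f := fun p : ι × ℕ => |φ p.1 x - π p.2 p.1 x|)
    ⟨2 * ‖x‖, Set.forall_mem_range.2 fun p => abs_sub_apply_le_two_mul_norm hφ hπ p.1 p.2 x⟩
    (i, k)

theorem approxGap_nonneg (x : X) : 0 ≤ approxGap φ π x :=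
  Real.iSup_nonneg fun _ => abs_nonneg _

theorem approxGap_le (hφ : ∀ i, ‖φ i‖ ≤ 1) (hπ : ∀ k i, ‖π k i‖ ≤ 1) (x : X) :
    approxGap φ π x ≤ 2 * ‖x‖ :=
  Real.iSup_le (fun p => abs_sub_apply_le_two_mul_norm hφ hπ p.1 p.2 x) (by positivity)

theorem approxGap_add_le (hφ : ∀ i, ‖φ i‖ ≤ 1) (hπ : ∀ k i, ‖π k i‖ ≤ 1) (x y : X) :
    approxGap φ π (x + y) ≤ approxGap φ π x + approxGap φ π y := by
  refine Real.iSup_le (fun ⟨i, k⟩ => ?_) (add_nonneg (approxGap_nonneg x) (approxGap_nonneg y))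
  calc |φ i (x + y) - π k i (x + y)| = |(φ i x - π k i x) + (φ i y - π k i y)| := by
        simp only [map_add]; ring_nf
    _ ≤ |φ i x - π k i x| + |φ i y - π k i y| := abs_add_le _ _
    _ ≤ _ := add_le_add (abs_sub_apply_le_approxGap hφ hπ i k x)
        (abs_sub_apply_le_approxGap hφ hπ i k y)

theorem approxGap_smul (c : ℝ) (x : X) : approxGap φ π (c • x) = |c| * approxGap φ π x := by
  simp only [approxGap, map_smul, smul_eq_mul, ← mul_sub, abs_mul,
    Real.mul_iSup_of_nonneg (abs_nonneg c)]

theorem norm_le_approxRenorm (x : X) : ‖x‖ ≤ approxRenorm φ π x := le_max_left _ _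

theorem approxRenorm_le (hφ : ∀ i, ‖φ i‖ ≤ 1) (hπ : ∀ k i, ‖π k i‖ ≤ 1) (x : X) :
    approxRenorm φ π x ≤ 2 * ‖x‖ :=
  max_le (by linarith [norm_nonneg x]) (approxGap_le hφ hπ x)

theorem approxRenorm_eq_zero_iff (x : X) : approxRenorm φ π x = 0 ↔ x = 0 := by
  refine ⟨fun h => norm_le_zero_iff.1 (h ▸ norm_le_approxRenorm x), ?_⟩
  rintro rfl
  simp [approxRenorm, approxGap]

theorem approxRenorm_add_le (hφ : ∀ i, ‖φ i‖ ≤ 1) (hπ : ∀ k i, ‖π k i‖ ≤ 1) (x y : X) :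
    approxRenorm φ π (x + y) ≤ approxRenorm φ π x + approxRenorm φ π y :=
  max_le ((norm_add_le x y).trans (add_le_add (le_max_left _ _) (le_max_left _ _)))
    ((approxGap_add_le hφ hπ x y).trans (add_le_add (le_max_right _ _) (le_max_right _ _)))

theorem approxRenorm_smul (c : ℝ) (x : X) :
    approxRenorm φ π (c • x) = |c| * approxRenorm φ π x := by
  simp only [approxRenorm, norm_smul, Real.norm_eq_abs, approxGap_smul,
    mul_max_of_nonneg _ _ (abs_nonneg c)]

section Projection

variable {K : ℕ} {δ : ℝ} {u v : X}

theorem approxGap_le_approxGap_add (hφ : ∀ i, ‖φ i‖ ≤ 1) (hπ : ∀ k i, ‖π k i‖ ≤ 1)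
    (hδ : 0 ≤ δ) (hu : ∀ k ≤ K, ∀ i, π k i u = 0)
    (hv : ∀ k ≥ K, ∀ i, |φ i v - π k i v| ≤ δ * ‖v‖) :
    approxGap φ π u ≤ approxGap φ π (v + u) + δ * ‖v‖ := by
  have hlarge : ∀ k ≥ K, ∀ i, |φ i u - π k i u| ≤ approxGap φ π (v + u) + δ * ‖v‖ :=
    fun k hk i => calc
      |φ i u - π k i u| = |(φ i (v + u) - π k i (v + u)) - (φ i v - π k i v)| := by
        simp only [map_add]; ring_nf
      _ ≤ |φ i (v + u) - π k i (v + u)| + |φ i v - π k i v| := abs_sub _ _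
      _ ≤ _ := add_le_add (abs_sub_apply_le_approxGap hφ hπ i k _) (hv k hk i)
  refine Real.iSup_le (fun ⟨i, k⟩ => ?_)
    (add_nonneg (approxGap_nonneg _) (mul_nonneg hδ (norm_nonneg v)))
  rcases le_total k K with hk | hk
  · calc |φ i u - π k i u| = |φ i u - π K i u| := by rw [hu k hk i, hu K le_rfl i]
      _ ≤ _ := hlarge K le_rfl i
  · exact hlarge k hk i

theorem norm_le_approxGap (hφ : ∀ i, ‖φ i‖ ≤ 1) (hπ : ∀ k i, ‖π k i‖ ≤ 1)
    (hnorming : ∀ x, ∃ i, φ i x = ‖x‖) (hu : ∀ i, π K i u = 0) : ‖u‖ ≤ approxGap φ π u := by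
  obtain ⟨i, hi⟩ := hnorming u
  calc ‖u‖ = |φ i u - π K i u| := by rw [hu i, sub_zero, hi, abs_norm]
    _ ≤ _ := abs_sub_apply_le_approxGap hφ hπ i K u

theorem one_sub_mul_norm_le_norm_add (hπ : ∀ k i, ‖π k i‖ ≤ 1)
    (hnorming : ∀ x, ∃ i, φ i x = ‖x‖) (hu : ∀ i, π K i u = 0)
    (hv : ∀ i, |φ i v - π K i v| ≤ δ * ‖v‖) : (1 - δ) * ‖v‖ ≤ ‖v + u‖ := by
  obtain ⟨i, hi⟩ := hnorming v
  have hπv : |π K i v| ≤ ‖v + u‖ := by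
    simpa [hu i] using (π K i).le_of_opNorm_le (hπ K i) (v + u)
  have hφv := hv i
  rw [hi] at hφv
  linarith [le_abs_self (‖v‖ - π K i v), le_abs_self (π K i v)]

theorem approxRenorm_le_one_add_two_mul (hφ : ∀ i, ‖φ i‖ ≤ 1) (hπ : ∀ k i, ‖π k i‖ ≤ 1)
    (hnorming : ∀ x, ∃ i, φ i x = ‖x‖) (hδ₀ : 0 ≤ δ) (hδ₁ : δ ≤ 1 / 2)
    (hu : ∀ k ≤ K, ∀ i, π k i u = 0) (hv : ∀ k ≥ K, ∀ i, |φ i v - π k i v| ≤ δ * ‖v‖) :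
    approxRenorm φ π u ≤ (1 + 2 * δ) * approxRenorm φ π (v + u) := by
  have hgap := approxGap_le_approxGap_add hφ hπ hδ₀ hu hv
  have hnorm := norm_le_approxGap hφ hπ hnorming (hu K le_rfl)
  have hv' := one_sub_mul_norm_le_norm_add hπ hnorming (hu K le_rfl) (hv K le_rfl)
  have hv2 : ‖v‖ ≤ 2 * approxRenorm φ π (v + u) := by
    nlinarith [norm_le_approxRenorm (φ := φ) (π := π) (v + u), norm_nonneg v]
  have hδv : δ * ‖v‖ ≤ δ * (2 * approxRenorm φ π (v + u)) := by gcongr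
  calc approxRenorm φ π u ≤ approxGap φ π u := max_le hnorm le_rfl
    _ ≤ approxRenorm φ π (v + u) + δ * ‖v‖ := hgap.trans (by gcongr; exact le_max_right _ _)
    _ ≤ _ := by linarith

end Projection

theorem exists_isCompl_inf_eq_bot_approxRenorm_le (hφ : ∀ i, ‖φ i‖ ≤ 1)
    (hπ : ∀ k i, ‖π k i‖ ≤ 1) (hnorming : ∀ x, ∃ i, φ i x = ‖x‖)
    (hfin : ∀ k, (Set.range (π k)).Finite)
    (hconv : ∀ x, TendstoUniformly (fun k i => π k i x) (fun i => φ i x) atTop)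
    (M : Submodule ℝ X) [FiniteDimensional ℝ M] {ε : ℝ} (hε : 0 < ε) :
    ∃ L : Submodule ℝ X, (∃ M' : Submodule ℝ X, FiniteDimensional ℝ M' ∧ IsCompl L M') ∧
      M ⊓ L = ⊥ ∧ ∃ C < 1 + ε, ∀ u ∈ L, ∀ v ∈ M,
        approxRenorm φ π u ≤ C * approxRenorm φ π (v + u) := by
  set δ := min (ε / 4) (1 / 2)
  have hδ₀ : 0 < δ := by positivity
  have hδ₁ : δ ≤ 1 / 2 := min_le_right _ _
  have hδε : δ ≤ ε / 4 := min_le_left _ _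
  have hunif := tendstoUniformly_of_forall_tendstoUniformly_apply
    (G := fun k i => π k i ∘L M.subtypeL) (G₀ := fun i => φ i ∘L M.subtypeL) fun x => hconv x
  obtain ⟨K, hK⟩ := eventually_atTop.1 (Metric.tendstoUniformly_iff.1 hunif δ hδ₀)
  have hM : ∀ v ∈ M, ∀ k ≥ K, ∀ i, |φ i v - π k i v| ≤ δ * ‖v‖ := fun v hv k hk i =>
    calc |φ i v - π k i v| = ‖(φ i ∘L M.subtypeL - π k i ∘L M.subtypeL) ⟨v, hv⟩‖ := rfl
      _ ≤ ‖φ i ∘L M.subtypeL - π k i ∘L M.subtypeL‖ * ‖v‖ := ContinuousLinearMap.le_opNorm _ _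
      _ ≤ δ * ‖v‖ := by gcongr; exact (dist_eq_norm (φ i ∘L M.subtypeL) _ ▸ hK k hk i).le
  set S : Set (X →ₗ[ℝ] ℝ) := ⋃ k ≤ K, Set.range fun i => (π k i : X →ₗ[ℝ] ℝ)
  have hS : S.Finite := (Set.finite_Iic K).biUnion fun k _ =>
    Set.range_comp _ (π k) ▸ (hfin k).image ((↑) : StrongDual ℝ X → X →ₗ[ℝ] ℝ)
  set L := ⨅ f ∈ S, LinearMap.ker f
  have hL : ∀ u ∈ L, ∀ k ≤ K, ∀ i, π k i u = 0 := fun u hu k hk i => by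
    simp only [L, Submodule.mem_iInf] at hu
    exact hu _ (Set.mem_biUnion (Set.mem_Iic.2 hk) ⟨i, rfl⟩)
  refine ⟨L, exists_finiteDimensional_isCompl_biInf_ker hS, ?_, 1 + 2 * δ, by linarith,
    fun u hu v hv => approxRenorm_le_one_add_two_mul hφ hπ hnorming hδ₀.le hδ₁ (hL u hu)
      (hM v hv)⟩
  refine (Submodule.eq_bot_iff _).2 fun v hv => ?_
  obtain ⟨hvM, hvL⟩ := Submodule.mem_inf.1 hv
  have h := one_sub_mul_norm_le_norm_add hπ hnorming
    (fun i => by rw [map_neg, hL v hvL K le_rfl i, neg_zero]) (hM v hvM K le_rfl)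
  rw [add_neg_cancel, norm_zero] at h
  exact norm_le_zero_iff.1 (nonpos_of_mul_nonpos_right h (by linarith))

end Renorming

/-- Lemma 3.3: every separable normed space admits an equivalent norm `N` such that for
every finite-dimensional subspace `M` and every `ε > 0` there is a finite-codimensional
subspace `L` with `M ∩ L = {0}` such that the projection of `⟨L,M⟩` has `N`-operator
norm `< 1 + ε`. -/
theorem exists_equivalent_norm_with_small_projections
    (X : Type*) [NormedAddCommGroup X] [NormedSpace ℝ X]
    [TopologicalSpace.SeparableSpace X] :
    ∃ N : X → ℝ,
      -- `N` is a norm on `X`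
      (∀ x : X, N x = 0 ↔ x = 0) ∧
      (∀ x y : X, N (x + y) ≤ N x + N y) ∧
      (∀ (c : ℝ) (x : X), N (c • x) = |c| * N x) ∧
      -- `N` is equivalent to the original norm
      (∃ C₁ C₂ : ℝ, 0 < C₁ ∧ 0 < C₂ ∧ ∀ x : X, C₁ * ‖x‖ ≤ N x ∧ N x ≤ C₂ * ‖x‖) ∧
      -- the projection property
      (∀ M : Submodule ℝ X, FiniteDimensional ℝ M → ∀ ε : ℝ, 0 < ε →
        ∃ L : Submodule ℝ X,
          -- `L` has finite codimension: it has a finite-dimensional complement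
          (∃ M' : Submodule ℝ X, FiniteDimensional ℝ M' ∧ IsCompl L M') ∧
          M ⊓ L = ⊥ ∧
          -- the projection `P : M + L → L`, `P(v + u) = u`, satisfies `|||P||| < 1 + ε`
          (∃ C : ℝ, C < 1 + ε ∧
            ∀ u ∈ L, ∀ v ∈ M, N u ≤ C * N (v + u))) := by
  obtain ⟨π, hπ, hfin, hconv⟩ := exists_finite_approx_closedBall_dual (X := X)
  set φ : closedBall (0 : StrongDual ℝ X) 1 → StrongDual ℝ X := Subtype.val
  have hφ : ∀ f, ‖φ f‖ ≤ 1 := fun f => mem_closedBall_zero_iff.1 f.2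
  have hnorming : ∀ x : X, ∃ f, φ f x = ‖x‖ := fun x => by
    obtain ⟨g, hg, hgx⟩ := exists_dual_vector'' ℝ x
    exact ⟨⟨g, mem_closedBall_zero_iff.2 hg⟩, hgx⟩
  refine ⟨approxRenorm φ π, approxRenorm_eq_zero_iff, approxRenorm_add_le hφ hπ,
    approxRenorm_smul, ⟨1, 2, one_pos, two_pos, fun x =>
      ⟨(one_mul ‖x‖).trans_le (norm_le_approxRenorm x), approxRenorm_le hφ hπ x⟩⟩,
    fun M _ ε hε => exists_isCompl_inf_eq_bot_approxRenorm_le hφ hπ hnorming hfin hconv M hε⟩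
end

section
/- Let M be a finite-dimensional linear subspace of a normed space X, let L ⊆ X be a closed linear subspace which is a complement of M in X (M ∩ L = {0}, M + L = X), and let P : X → L be the projection of ⟨L,M⟩. If A ⊆ X is a bounded closed set, then P(A) is closed. -/
open Metric Bornology Topology Filter
open scoped Topology

/-- Lemma 3.4(a): if `M` is a finite-dimensional subspace of a normed space `X`,
`L` a closed complement of `M`, and `P` the projection of `⟨L,M⟩`, then the image
under `P` of a bounded closed set is closed. -/
theorem projection_image_of_bounded_closed_isClosed
    (X : Type*) [NormedAddCommGroup X] [NormedSpace ℝ X]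
    (M L : Submodule ℝ X) [FiniteDimensional ℝ M]
    (hLclosed : IsClosed (L : Set X))
    (hML : M ⊓ L = ⊥) (hMLtop : M ⊔ L = ⊤)
    (P : X → X)
    (hP : ∀ v ∈ M, ∀ u ∈ L, P (v + u) = u)
    (A : Set X) (hAb : IsBounded A) (hAc : IsClosed A) :
    IsClosed (P '' A) := by
  rw [← isSeqClosed_iff_isClosed]
  intro u y hu huy
  choose a ha hPa using hu
  have hdec : ∀ n, ∃ m ∈ M, ∃ l ∈ L, a n = m + l := by
    intro n
    have hmem : a n ∈ M ⊔ L := by rw [hMLtop]; trivial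
    rcases Submodule.mem_sup.mp hmem with ⟨m, hm, l, hl, h⟩
    exact ⟨m, hm, l, hl, h.symm⟩
  choose m hm l hl hal using hdec
  have hul : ∀ n, u n = l n := fun n => by
    rw [← hPa n, hal n, hP _ (hm n) _ (hl n)]
  have hyL : y ∈ L :=
    hLclosed.mem_of_tendsto huy
      (Filter.Eventually.of_forall fun n => by rw [hul n]; exact hl n)
  -- bounds
  obtain ⟨C₁, hC₁⟩ := hAb.exists_norm_le
  have hcomp : IsCompact (insert y (Set.range u)) := huy.isCompact_insert_range
  obtain ⟨C₂, hC₂⟩ := hcomp.isBounded.exists_norm_le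
  have hmbd : ∀ n, ‖m n‖ ≤ C₁ + C₂ := by
    intro n
    have : m n = a n - u n := by rw [hul n, hal n]; abel
    rw [this]
    calc ‖a n - u n‖ ≤ ‖a n‖ + ‖u n‖ := norm_sub_le _ _
      _ ≤ C₁ + C₂ := add_le_add (hC₁ _ (ha n))
          (hC₂ _ (Set.mem_insert_of_mem _ ⟨n, rfl⟩))
  -- subsequence in the finite-dimensional M
  set s : ℕ → M := fun n => ⟨m n, hm n⟩ with hs
  have hsball : ∀ n, s n ∈ closedBall (0 : M) (C₁ + C₂) := by
    intro n
    rw [mem_closedBall, dist_zero_right]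
    exact hmbd n
  obtain ⟨mlim, _, φ, hφmono, hφlim⟩ :=
    (isCompact_closedBall (0 : M) (C₁ + C₂)).tendsto_subseq hsball
  have hmlim : Filter.Tendsto (fun n => m (φ n)) Filter.atTop (𝓝 (mlim : X)) :=
    (continuous_subtype_val.tendsto mlim).comp hφlim
  have halim : Filter.Tendsto (fun n => a (φ n)) Filter.atTop (𝓝 ((mlim : X) + y)) := by
    have heq : (fun n => a (φ n)) = fun n => m (φ n) + u (φ n) := by
      funext n; rw [hal (φ n), hul (φ n)]
    rw [heq]
    exact hmlim.add (huy.comp hφmono.tendsto_atTop)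
  have hA : (mlim : X) + y ∈ A :=
    hAc.mem_of_tendsto halim (Filter.Eventually.of_forall fun n => ha (φ n))
  exact ⟨(mlim : X) + y, hA, hP _ mlim.2 _ hyL⟩
end

section
/- Let M be a finite-dimensional linear subspace of a normed space X, let L ⊆ X be a closed linear subspace which is a complement of M in X (M ∩ L = {0}, M + L = X), and let P : X → L be the projection of ⟨L,M⟩. If 𝒮 is a locally finite family of subsets of X such that ⋃_{S∈𝒮} S is bounded, then {P(S) : S ∈ 𝒮} is a locally finite family. -/
open Metric Bornology

/-- Lemma 3.4(b): if `M` is a finite-dimensional subspace of a normed space `X`,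
`L` a closed complement of `M`, and `P` the projection of `⟨L,M⟩`, then the image
under `P` of a locally finite family of sets with bounded union is locally finite. -/
theorem projection_image_locallyFinite
    (X : Type*) [NormedAddCommGroup X] [NormedSpace ℝ X]
    (M L : Submodule ℝ X) [FiniteDimensional ℝ M]
    (hLclosed : IsClosed (L : Set X))
    (hML : M ⊓ L = ⊥) (hMLtop : M ⊔ L = ⊤)
    (P : X → X)
    (hP : ∀ v ∈ M, ∀ u ∈ L, P (v + u) = u)
    (𝒮 : Set (Set X))
    (h𝒮 : LocallyFinite (fun S : 𝒮 => (S : Set X)))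
    (hb : IsBounded (⋃₀ 𝒮)) :
    LocallyFinite (fun S : 𝒮 => P '' (S : Set X)) := by
  obtain ⟨R, hR⟩ := hb.subset_closedBall 0
  intro y
  set ρ : ℝ := R + ‖y‖ + 1 with hρ
  set C : Set X := (fun m : M => (m : X)) '' Metric.closedBall 0 ρ with hC
  have hCcomp : IsCompact C := (isCompact_closedBall _ _).image continuous_subtype_val
  set K : Set X := (fun c => y + c) '' C with hK
  have hKcomp : IsCompact K := hCcomp.image (continuous_const.add continuous_id)
  choose U hU hUfin using h𝒮
  have hcover : K ⊆ ⋃ z ∈ K, interior (U z) := fun z hz =>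
    Set.mem_biUnion hz (mem_interior_iff_mem_nhds.2 (hU z))
  obtain ⟨t, htK, htfin, htcover⟩ :=
    hKcomp.elim_finite_subcover_image (fun z _ => isOpen_interior) hcover
  set V : Set X := ⋃ z ∈ t, interior (U z) with hV
  have hVopen : IsOpen V := isOpen_biUnion fun z _ => isOpen_interior
  obtain ⟨δ, hδpos, hδ⟩ := hKcomp.exists_thickening_subset_open hVopen htcover
  refine ⟨Metric.ball y (min δ 1), Metric.ball_mem_nhds _ (lt_min hδpos one_pos), ?_⟩
  have hfin : {S : 𝒮 | ((S : Set X) ∩ V).Nonempty}.Finite := by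
    refine ((htfin.biUnion fun z _ => hUfin z)).subset ?_
    rintro S ⟨x, hxS, hxV⟩
    obtain ⟨z, hz, hxz⟩ := Set.mem_iUnion₂.1 hxV
    exact Set.mem_biUnion hz ⟨x, hxS, interior_subset hxz⟩
  refine hfin.subset ?_
  rintro S ⟨w, ⟨x, hxS, rfl⟩, hwball⟩
  have hxtop : x ∈ M ⊔ L := hMLtop ▸ Submodule.mem_top
  obtain ⟨v, hv, u, hu, hvu⟩ := Submodule.mem_sup.1 hxtop
  have hPx : P x = u := by rw [← hvu, hP v hv u hu]
  rw [hPx] at hwball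
  have hxnorm : ‖x‖ ≤ R := by
    have := hR ⟨S, S.2, hxS⟩
    simpa using this
  have hunorm : ‖u‖ < ‖y‖ + 1 := by
    have h1 : dist u y < min δ 1 := hwball
    calc ‖u‖ ≤ ‖y‖ + ‖u - y‖ := norm_le_insert' u y
    _ < ‖y‖ + 1 := by
        have : ‖u - y‖ < 1 := lt_of_lt_of_le (by rwa [dist_eq_norm] at h1) (min_le_right _ _)
        linarith
    _ = ‖y‖ + 1 := by ring
  have hvnorm : ‖v‖ ≤ ρ := by
    have : v = x - u := by rw [← hvu]; abel
    rw [this]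
    calc ‖x - u‖ ≤ ‖x‖ + ‖u‖ := norm_sub_le x u
    _ ≤ R + (‖y‖ + 1) := by linarith [hunorm.le]
    _ = ρ := by rw [hρ]; ring
  have hvC : v ∈ C := by
    refine ⟨⟨v, hv⟩, ?_, rfl⟩
    simpa [Metric.mem_closedBall, dist_eq_norm] using hvnorm
  have hxth : x ∈ Metric.thickening δ K := by
    rw [Metric.mem_thickening_iff]
    refine ⟨y + v, ⟨v, hvC, rfl⟩, ?_⟩
    have : x - (y + v) = u - y := by rw [← hvu]; abel
    rw [dist_eq_norm, this, ← dist_eq_norm]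
    exact lt_of_lt_of_le hwball (min_le_left _ _)
  exact ⟨x, hxS, hδ hxth⟩
end

section
/- Let M be a finite-dimensional linear subspace of a normed space X, let L ⊆ X be a closed linear subspace which is a complement of M in X (M ∩ L = {0}, M + L = X), and let P : X → L be the projection of ⟨L,M⟩. If 𝒮 is a separated family of subsets of X such that ⋃_{S∈𝒮} S is bounded, then the family {P(S) : S ∈ 𝒮} has finite order. -/
open Metric Bornology

/-- A family of subsets of a metric space is separated if for some `r > 0` any two
distinct members are at distance `> r`. -/
def SeparatedFam {E : Type*} [MetricSpace E] (𝒮 : Set (Set E)) : Prop :=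
  ∃ r : ℝ, 0 < r ∧ ∀ S ∈ 𝒮, ∀ T ∈ 𝒮, S ≠ T → ∀ x ∈ S, ∀ y ∈ T, r < dist x y

/-- Lemma 3.4(c): if `M` is a finite-dimensional subspace of a normed space `X`,
`L` a closed complement of `M`, and `P` the projection of `⟨L,M⟩`, then the image
under `P` of a separated family of sets with bounded union has finite order. -/
theorem projection_image_finite_order
    (X : Type*) [NormedAddCommGroup X] [NormedSpace ℝ X]
    (M L : Submodule ℝ X) [FiniteDimensional ℝ M]
    (hLclosed : IsClosed (L : Set X))
    (hML : M ⊓ L = ⊥) (hMLtop : M ⊔ L = ⊤)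
    (P : X → X)
    (hP : ∀ v ∈ M, ∀ u ∈ L, P (v + u) = u)
    (𝒮 : Set (Set X))
    (h𝒮 : SeparatedFam 𝒮)
    (hb : IsBounded (⋃₀ 𝒮)) :
    ∃ k : ℕ, ∀ x : X,
      {S : 𝒮 | x ∈ P '' (S : Set X)}.Finite ∧
      {S : 𝒮 | x ∈ P '' (S : Set X)}.ncard ≤ k := by
  classical
  obtain ⟨r, hr, hsep⟩ := h𝒮
  obtain ⟨R, hR⟩ := hb.subset_closedBall 0
  have hK : IsCompact (Metric.closedBall (0 : M) (2 * R)) := isCompact_closedBall _ _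
  obtain ⟨t, htfin, htcov⟩ :=
    (Metric.totallyBounded_iff.mp hK.totallyBounded) (r / 2) (by linarith)
  refine ⟨t.ncard, fun x => ?_⟩
  by_cases hAe : {S : 𝒮 | x ∈ P '' (S : Set X)} = ∅
  · rw [hAe]; simp
  set A := {S : 𝒮 | x ∈ P '' (S : Set X)} with hA
  have hmem : ∀ s : X, P s = x → s - x ∈ M := by
    intro s hs
    have hst : s ∈ M ⊔ L := by rw [hMLtop]; trivial
    rw [Submodule.mem_sup] at hst
    obtain ⟨v, hv, u, hu, hvu⟩ := hst
    have hPu : P s = u := by rw [← hvu]; exact hP v hv u hu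
    have hux : u = x := by rw [← hPu, hs]
    have hsx : s - x = v := by rw [← hvu, hux]; abel
    rw [hsx]; exact hv
  have hA0 : A.Nonempty := Set.nonempty_iff_ne_empty.mpr hAe
  obtain ⟨S₀, hS₀⟩ := hA0
  obtain ⟨s₀, hs₀S, hs₀P⟩ := hS₀
  -- witness function
  have hwex : ∀ S : 𝒮, ∃ s : X, S ∈ A → s ∈ (S : Set X) ∧ P s = x := by
    intro S
    by_cases h : S ∈ A
    · obtain ⟨a, ha, hpa⟩ := h
      exact ⟨a, fun _ => ⟨ha, hpa⟩⟩
    · exact ⟨0, fun h' => absurd h' h⟩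
  choose w hwspec using hwex
  have hnorm : ∀ S ∈ A, ‖w S‖ ≤ R := by
    intro S hS
    have h1 : w S ∈ ⋃₀ 𝒮 := ⟨S, S.2, (hwspec S hS).1⟩
    simpa [mem_closedBall_zero_iff] using hR h1
  have hs0norm : ‖s₀‖ ≤ R := by
    have h1 : s₀ ∈ ⋃₀ 𝒮 := ⟨S₀, S₀.2, hs₀S⟩
    simpa [mem_closedBall_zero_iff] using hR h1
  -- the M-components
  have hnMex : ∀ S : 𝒮, ∃ m : M, S ∈ A → (m : X) = w S - s₀ := by
    intro S
    by_cases h : S ∈ A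
    · have h1 : w S - x ∈ M := hmem _ (hwspec S h).2
      have h2 : s₀ - x ∈ M := hmem _ hs₀P
      have h3 : w S - s₀ ∈ M := by
        have he : w S - s₀ = (w S - x) - (s₀ - x) := by abel
        rw [he]; exact sub_mem h1 h2
      exact ⟨⟨w S - s₀, h3⟩, fun _ => rfl⟩
    · exact ⟨0, fun h' => absurd h' h⟩
  choose nM hnMeq using hnMex
  have hnMball : ∀ S ∈ A, nM S ∈ Metric.closedBall (0 : M) (2 * R) := by
    intro S hS
    rw [mem_closedBall_zero_iff]
    have h1 : ‖(nM S : X)‖ ≤ 2 * R := by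
      rw [hnMeq S hS]
      calc ‖w S - s₀‖ ≤ ‖w S‖ + ‖s₀‖ := norm_sub_le _ _
        _ ≤ 2 * R := by linarith [hnorm S hS, hs0norm]
    simpa using h1
  -- choose cover points
  have hφex : ∀ S : 𝒮, ∃ y : M, S ∈ A → y ∈ t ∧ dist (nM S) y < r / 2 := by
    intro S
    by_cases h : S ∈ A
    · have h1 := htcov (hnMball S h)
      simp only [Set.mem_iUnion] at h1
      obtain ⟨y, hy, hyb⟩ := h1
      exact ⟨y, fun _ => ⟨hy, by simpa [Metric.mem_ball] using hyb⟩⟩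
    · exact ⟨0, fun h' => absurd h' h⟩
  choose φ hφspec using hφex
  -- injectivity on A
  have hinj : Set.InjOn φ A := by
    intro S hS T hT hST
    by_contra hne
    have hsetne : (S : Set X) ≠ (T : Set X) := fun h => hne (Subtype.ext h)
    have hd : r < dist (w S) (w T) :=
      hsep S S.2 T T.2 hsetne (w S) (hwspec S hS).1 (w T) (hwspec T hT).1
    have hd2 : dist (nM S) (nM T) = dist (w S) (w T) := by
      rw [Subtype.dist_eq, hnMeq S hS, hnMeq T hT, dist_sub_right]
    have h3 : dist (nM S) (nM T) ≤ dist (nM S) (φ S) + dist (φ T) (nM T) := by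
      rw [hST]; exact dist_triangle _ _ _
    have h4 := (hφspec S hS).2
    have h5 := (hφspec T hT).2
    rw [dist_comm] at h5
    have h6 : r < dist (nM S) (nM T) := hd2 ▸ hd
    linarith
  have himg : φ '' A ⊆ t := by
    rintro _ ⟨S, hS, rfl⟩
    exact (hφspec S hS).1
  have hAfin : A.Finite := Set.Finite.of_finite_image (htfin.subset himg) hinj
  refine ⟨hAfin, ?_⟩
  calc A.ncard = (φ '' A).ncard := (Set.ncard_image_of_injOn hinj).symm
    _ ≤ t.ncard := Set.ncard_le_ncard himg htfin
end

section
/- Let M be a finite-dimensional linear subspace of a Banach space X, let L ⊆ X be a closed linear subspace which is a complement of M in X (M ∩ L = {0}, M + L = X), and let P : X → L be the projection of ⟨L,M⟩. Then for every weakly closed bounded subset A ⊆ X, the image P(A) is weakly closed. -/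
open Metric Bornology

/-! The projection `P` is continuous, being a projection onto a closed subspace along a
finite-dimensional one, so `a - P a` stays in a norm-compact subset `K` of `M` as `a` ranges over
the bounded set `A`. Then `P '' A = L ∩ (A - K)`, and in the weak topology `L` is closed (it is
convex and norm-closed), `A` is closed and `K` is compact, so `A - K` and the intersection are
closed. -/

def IsWeaklyClosed {F : Type*} [NormedAddCommGroup F] [NormedSpace ℝ F]
    (S : Set F) : Prop :=
  IsClosed (X := WeakSpace ℝ F) S

open Pointwise

theorem Submodule.eq_projection_of_apply_add {R E : Type*} [Ring R] [AddCommGroup E] [Module R E]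
    {p q : Submodule R E} (h : IsCompl p q) {f : E → E}
    (hf : ∀ v ∈ q, ∀ u ∈ p, f (v + u) = u) :
    f = p.projection q h := by
  funext x
  calc f x = f (q.projection p h.symm x + p.projection q h x) := by
        rw [add_comm, Submodule.projection_add_projection_eq_self]
    _ = p.projection q h x := hf _ (Submodule.projection_apply_mem _ _) _
        (Submodule.projection_apply_mem _ _)

section AddCommGroup

variable {G : Type*} [AddCommGroup G] {f : G → G} {S T K A : Set G}

theorem image_eq_inter_sub_of_apply_add (hf : ∀ v ∈ T, ∀ u ∈ S, f (v + u) = u) (hKT : K ⊆ T)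
    (hA : ∀ a ∈ A, f a ∈ S ∧ a - f a ∈ K) :
    f '' A = S ∩ (A - K) := by
  ext y
  constructor
  · rintro ⟨a, ha, rfl⟩
    exact ⟨(hA a ha).1, a, ha, a - f a, (hA a ha).2, sub_sub_cancel a (f a)⟩
  · rintro ⟨hyS, a, ha, k, hk, rfl⟩
    refine ⟨a, ha, ?_⟩
    simpa using hf k (hKT hk) (a - k) hyS

theorem isClosed_image_of_apply_add [TopologicalSpace G] [IsTopologicalAddGroup G]
    (hf : ∀ v ∈ T, ∀ u ∈ S, f (v + u) = u) (hS : IsClosed S) (hA : IsClosed A)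
    (hK : IsCompact K) (hKT : K ⊆ T) (hfA : ∀ a ∈ A, f a ∈ S ∧ a - f a ∈ K) :
    IsClosed (f '' A) := by
  rw [image_eq_inter_sub_of_apply_add hf hKT hfA, sub_eq_add_neg]
  exact hS.inter (hA.add_right_of_isCompact hK.neg)

end AddCommGroup

section WeakTopology

variable {E : Type*} [NormedAddCommGroup E] [NormedSpace ℝ E]

theorem Convex.isWeaklyClosed {s : Set E} (hs : Convex ℝ s) (hc : IsClosed s) :
    IsWeaklyClosed s := by
  have h := hs.toWeakSpace_closure ℝ
  rw [hc.closure_eq, show toWeakSpace ℝ E '' s = s from Set.image_id s] at h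
  exact isClosed_of_closure_subset h.ge

theorem IsCompact.isCompact_weakSpace {K : Set E} (hK : IsCompact K) :
    IsCompact (X := WeakSpace ℝ E) K := by
  have h := hK.image (toWeakSpaceCLM ℝ E).continuous
  rwa [show toWeakSpaceCLM ℝ E '' K = K from Set.image_id K] at h

end WeakTopology

theorem projection_image_weakly_closed_general
    (X : Type*) [NormedAddCommGroup X] [NormedSpace ℝ X]
    (M L : Submodule ℝ X) [FiniteDimensional ℝ M]
    (hLclosed : IsClosed (L : Set X))
    (hML : M ⊓ L = ⊥) (hMLtop : M ⊔ L = ⊤)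
    (P : X → X)
    (hP : ∀ v ∈ M, ∀ u ∈ L, P (v + u) = u)
    (A : Set X) (hAwc : IsWeaklyClosed A) (hAb : IsBounded A) :
    IsWeaklyClosed (P '' A) := by
  have hLM : L.IsTopCompl M :=
    Submodule.IsCompl.isTopCompl_of_isClosed_of_finiteDimensional (IsCompl.of_eq hML hMLtop).symm
      hLclosed
  have hPL : P = L.projectionL M hLM := Submodule.eq_projection_of_apply_add hLM.isCompl hP
  let Q := M.projectionOntoL L hLM.symm
  let K : Set X := ((↑) : M → X) '' closure (Q '' A)
  have hK : IsCompact K :=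
    (Q.lipschitz.isBounded_image hAb).isCompact_closure.image continuous_subtype_val
  have hPA : ∀ a ∈ A, P a ∈ (L : Set X) ∧ a - P a ∈ K := by
    intro a ha
    rw [hPL, ← Submodule.projectionL_eq_self_sub_projectionL]
    exact ⟨Submodule.projectionL_apply_mem hLM a, Q a, subset_closure ⟨a, ha, rfl⟩, rfl⟩
  exact isClosed_image_of_apply_add (G := WeakSpace ℝ X) hP (L.convex.isWeaklyClosed hLclosed)
    hAwc hK.isCompact_weakSpace (Set.image_subset_iff.mpr fun m _ => m.2) hPA

/-- Lemma 3.9: if `M` is a finite-dimensional subspace of a Banach space `X`,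
`L` a closed complement of `M`, and `P` the projection of `⟨L,M⟩`, then the image
under `P` of a weakly closed bounded set is weakly closed. -/
theorem projection_image_weakly_closed
    (X : Type*) [NormedAddCommGroup X] [NormedSpace ℝ X] [CompleteSpace X]
    (M L : Submodule ℝ X) [FiniteDimensional ℝ M]
    (hLclosed : IsClosed (L : Set X))
    (hML : M ⊓ L = ⊥) (hMLtop : M ⊔ L = ⊤)
    (P : X → X)
    (hP : ∀ v ∈ M, ∀ u ∈ L, P (v + u) = u)
    (A : Set X) (hAwc : IsWeaklyClosed A) (hAb : IsBounded A) :
    IsWeaklyClosed (P '' A) :=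
  projection_image_weakly_closed_general X M L hLclosed hML hMLtop P hP A hAwc hAb
end
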